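/- arXiv:2505.21528 — 2 statements merged into one kernel-verified Lean document; each statement's English description precedes it below -/
import Mathlib

section
/- Let θ: ℝ → ℝ be continuous with θ(z) > 0, let T > 0, c ≥ 0, and define θ̄(t) = ∫_0^t θ(z) dz, θ̄(t,T) = ∫_t^T θ(z) dz, κ(t) = exp(θ̄(t,T)) · (c + 1 - exp(-2θ̄(t,T))), ρ(t) = exp(θ̄(t)) · (1 - exp(-2θ̄(t))), and β(t) = log(κ(t)/ρ(t)). Then β is strictly decreasing on (0, T). -/
open Real MeasureTheory intervalIntegral

theorem stmt_1 (θ : ℝ → ℝ) (hθc : Continuous θ) (hθpos : ∀ z, 0 < θ z)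
    (T : ℝ) (hT : 0 < T) (c : ℝ) (hc : 0 ≤ c) :
    StrictAntiOn
      (fun t =>
        Real.log
          ((Real.exp (∫ z in t..T, θ z) * (c + 1 - Real.exp (-2 * ∫ z in t..T, θ z))) /
            (Real.exp (∫ z in (0:ℝ)..t, θ z) * (1 - Real.exp (-2 * ∫ z in (0:ℝ)..t, θ z)))))
      (Set.Ioo 0 T) := by
  intro x hx y hy hxy
  have hθint : ∀ a b : ℝ, IntervalIntegrable θ volume a b :=
    fun a b => hθc.intervalIntegrable a b
  have hpos : ∀ a b : ℝ, a < b → 0 < ∫ z in a..b, θ z := fun a b hab =>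
    intervalIntegral.intervalIntegral_pos_of_pos (hθint a b) (fun z => hθpos z) hab
  simp only
  set Ax := ∫ z in x..T, θ z with hAxdef
  set Ay := ∫ z in y..T, θ z with hAydef
  set Bx := ∫ z in (0:ℝ)..x, θ z with hBxdef
  set By := ∫ z in (0:ℝ)..y, θ z with hBydef
  have hAy : 0 < Ay := hpos y T hy.2
  have hAxy : Ay < Ax := by
    have h : Ax = (∫ z in x..y, θ z) + Ay :=
      (intervalIntegral.integral_add_adjacent_intervals (hθint x y) (hθint y T)).symm
    rw [h]; linarith [hpos x y hxy]
  have hAx : 0 < Ax := lt_trans hAy hAxy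
  have hBx : 0 < Bx := hpos 0 x hx.1
  have hBxy : Bx < By := by
    have h : By = Bx + ∫ z in x..y, θ z :=
      (intervalIntegral.integral_add_adjacent_intervals (hθint 0 x) (hθint x y)).symm
    rw [h]; linarith [hpos x y hxy]
  have hBy : 0 < By := lt_trans hBx hBxy
  -- positivity of numerators and denominators
  have hNfac : ∀ A : ℝ, 0 < A → 0 < c + 1 - Real.exp (-2 * A) := by
    intro A hA
    have : Real.exp (-2 * A) < 1 := by
      rw [Real.exp_lt_one_iff]; nlinarith
    linarith
  have hDfac : ∀ B : ℝ, 0 < B → 0 < 1 - Real.exp (-2 * B) := by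
    intro B hB
    have : Real.exp (-2 * B) < 1 := by
      rw [Real.exp_lt_one_iff]; nlinarith
    linarith
  have hNx : 0 < Real.exp Ax * (c + 1 - Real.exp (-2 * Ax)) :=
    mul_pos (Real.exp_pos _) (hNfac Ax hAx)
  have hNy : 0 < Real.exp Ay * (c + 1 - Real.exp (-2 * Ay)) :=
    mul_pos (Real.exp_pos _) (hNfac Ay hAy)
  have hDx : 0 < Real.exp Bx * (1 - Real.exp (-2 * Bx)) :=
    mul_pos (Real.exp_pos _) (hDfac Bx hBx)
  have hDy : 0 < Real.exp By * (1 - Real.exp (-2 * By)) :=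
    mul_pos (Real.exp_pos _) (hDfac By hBy)
  -- rewrite products as differences of exponentials
  have hexpand : ∀ A : ℝ, Real.exp A * (c + 1 - Real.exp (-2 * A)) =
      (c + 1) * Real.exp A - Real.exp (-A) := by
    intro A
    have : Real.exp A * Real.exp (-2 * A) = Real.exp (-A) := by
      rw [← Real.exp_add]; ring_nf
    nlinarith [this]
  have hexpandD : ∀ B : ℝ, Real.exp B * (1 - Real.exp (-2 * B)) =
      Real.exp B - Real.exp (-B) := by
    intro B
    have : Real.exp B * Real.exp (-2 * B) = Real.exp (-B) := by
      rw [← Real.exp_add]; ring_nf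
    nlinarith [this]
  -- numerator strictly decreases, denominator strictly increases
  have hNlt : Real.exp Ay * (c + 1 - Real.exp (-2 * Ay)) <
      Real.exp Ax * (c + 1 - Real.exp (-2 * Ax)) := by
    rw [hexpand, hexpand]
    have h1 : Real.exp Ay < Real.exp Ax := Real.exp_lt_exp.2 hAxy
    have h2 : Real.exp (-Ax) < Real.exp (-Ay) := Real.exp_lt_exp.2 (by linarith)
    nlinarith
  have hDlt : Real.exp Bx * (1 - Real.exp (-2 * Bx)) <
      Real.exp By * (1 - Real.exp (-2 * By)) := by
    rw [hexpandD, hexpandD]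
    have h1 : Real.exp Bx < Real.exp By := Real.exp_lt_exp.2 hBxy
    have h2 : Real.exp (-By) < Real.exp (-Bx) := Real.exp_lt_exp.2 (by linarith)
    linarith
  rw [Real.log_div (ne_of_gt hNy) (ne_of_gt hDy),
      Real.log_div (ne_of_gt hNx) (ne_of_gt hDx)]
  have l1 := Real.log_lt_log hNy hNlt
  have l2 := Real.log_lt_log hDx hDlt
  linarith
end

section
/- Let 0 < t < s < T and σ: ℝ → ℝ with 0 < σ(t) < σ(s) < σ(T). Define c(u)² = σ(u)²(1 - σ(u)²/σ(T)²) and ζ(s,t)² = σ(t)² - σ(t)⁴/σ(s)². Then c(t)² - ζ(s,t)² ≥ 0 and √(c(t)² - ζ(s,t)²) / c(s) = σ(t)²/σ(s)². -/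
open Real

theorem stmt_11 (t s T : ℝ) (ht : 0 < t) (hts : t < s) (hsT : s < T)
    (σ : ℝ → ℝ) (hσt : 0 < σ t) (hσts : σ t < σ s) (hσsT : σ s < σ T)
    (c : ℝ → ℝ) (hc : ∀ u, c u = σ u * Real.sqrt (1 - σ u ^ 2 / σ T ^ 2))
    (ζsq : ℝ) (hζ : ζsq = σ t ^ 2 - σ t ^ 4 / σ s ^ 2) :
    0 ≤ c t ^ 2 - ζsq ∧
      Real.sqrt (c t ^ 2 - ζsq) / c s = σ t ^ 2 / σ s ^ 2 := by
  have hσs : 0 < σ s := hσt.trans hσts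
  have hσT : 0 < σ T := hσs.trans hσsT
  have hA : 0 < 1 - σ s ^ 2 / σ T ^ 2 := by
    rw [sub_pos, div_lt_one (by positivity)]
    nlinarith
  have hAt : 0 ≤ 1 - σ t ^ 2 / σ T ^ 2 := by
    rw [sub_nonneg, div_le_one (by positivity)]
    nlinarith
  have hct : c t ^ 2 = σ t ^ 2 * (1 - σ t ^ 2 / σ T ^ 2) := by
    rw [hc, mul_pow, sq_sqrt hAt]
  have hkey : c t ^ 2 - ζsq = σ t ^ 4 * (1 - σ s ^ 2 / σ T ^ 2) / σ s ^ 2 := by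
    rw [hct, hζ]; field_simp; ring
  have h0 : 0 ≤ c t ^ 2 - ζsq := by rw [hkey]; positivity
  refine ⟨h0, ?_⟩
  have hsq : Real.sqrt (c t ^ 2 - ζsq) = σ t ^ 2 * Real.sqrt (1 - σ s ^ 2 / σ T ^ 2) / σ s := by
    rw [hkey]
    rw [show σ t ^ 4 * (1 - σ s ^ 2 / σ T ^ 2) / σ s ^ 2
        = (σ t ^ 2 * Real.sqrt (1 - σ s ^ 2 / σ T ^ 2) / σ s) ^ 2 by
      rw [div_pow, mul_pow, sq_sqrt hA.le]; ring]
    exact Real.sqrt_sq (by positivity)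
  rw [hsq, hc s]
  rw [div_div, div_eq_div_iff (by positivity) (by positivity)]
  ring
end
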